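/- arXiv:2108.10405 — 2 statements merged into one kernel-verified Lean document; each statement's English description precedes it below -/
import Mathlib

section
/- Let S ⊆ C^d ⊗ C^d be the span of the vectors (e_i ⊗ e_{i+k} − e_{i+1} ⊗ e_{i+k+1}) + (e_{i+k} ⊗ e_i − e_{i+k+1} ⊗ e_{i+1}) over all 1 ≤ i < d, k ≥ 0 with i + k < d. Then S is contained in the symmetric subspace of C^d ⊗ C^d and has dimension d(d−1)/2. -/
open Matrix

noncomputable def symSubspace (d : ℕ) : Submodule ℂ (Fin d × Fin d → ℂ) :=
  Submodule.span ℂ { x | ∃ v : Fin d → ℂ, x = fun p => v p.1 * v p.2 }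

/-- Standard basis vector e_a ⊗ e_b of ℂ^d ⊗ ℂ^d. -/
noncomputable def eTens {d : ℕ} (a b : Fin d) : Fin d × Fin d → ℂ :=
  fun p => if p = (a, b) then 1 else 0

/-- The special subspace S spanned by
(e_i ⊗ e_{i+k} − e_{i+1} ⊗ e_{i+k+1}) + (e_{i+k} ⊗ e_i − e_{i+k+1} ⊗ e_{i+1}),
written here with 0-indexed i. -/
noncomputable def specialSubspace (d : ℕ) : Submodule ℂ (Fin d × Fin d → ℂ) :=
  Submodule.span ℂ
    { x | ∃ (i k : ℕ) (h1 : i + 1 < d) (h2 : i + k + 1 < d),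
        x = (eTens ⟨i, by omega⟩ ⟨i + k, by omega⟩ -
              eTens ⟨i + 1, h1⟩ ⟨i + k + 1, h2⟩) +
            (eTens ⟨i + k, by omega⟩ ⟨i, by omega⟩ -
              eTens ⟨i + k + 1, h2⟩ ⟨i + 1, h1⟩) }

/-!
Each generator of `S` is `(e_i ⊗ e_j + e_j ⊗ e_i) - (e_{i+1} ⊗ e_{j+1} + e_{j+1} ⊗ e_{i+1})`
with `i ≤ j < d - 1`, and `e_u ⊗ e_v + e_v ⊗ e_u` is a polarization of squares `w ⊗ w`, so `S`
is symmetric. The generators are linearly independent: pair the one indexed by `(i, j)` with the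
functional summing the entries along the diagonal ray starting at `(i + 1, j + 1)`; along each
diagonal the entries of a generator telescope, so this ray sees only the generator `(i, j)`.
Hence `dim S` is the number of unordered pairs from a `(d - 1)`-set, `d (d - 1) / 2`.
-/

theorem LinearIndependent.of_pairwise_dual_eq_zero_of_ne_zero {ι K V : Type*} [Field K]
    [AddCommGroup V] [Module K V] (v : ι → V) (f : ι → Module.Dual K V)
    (h1 : Pairwise fun i j ↦ f i (v j) = 0) (h2 : ∀ i, f i (v i) ≠ 0) :
    LinearIndependent K v :=
  .of_pairwise_dual_eq_zero_one v (fun i ↦ (f i (v i))⁻¹ • f i)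
    (fun i j hij ↦ by simp [h1 hij]) (fun i ↦ by simp [h2 i])

theorem Fintype.card_subtype_fst_le_snd (α : Type*) [Fintype α] [LinearOrder α] :
    Fintype.card {p : α × α // p.1 ≤ p.2} = (Fintype.card α + 1).choose 2 := by
  rw [← Sym2.card, Fintype.card_congr Sym2.sortEquiv]

lemma eTens_add_eTens_mem_symSubspace {d : ℕ} (u v : Fin d) :
    eTens u v + eTens v u ∈ symSubspace d := by
  set square : (Fin d → ℂ) → Fin d × Fin d → ℂ := fun w p ↦ w p.1 * w p.2
  have square_mem (w : Fin d → ℂ) : square w ∈ symSubspace d := Submodule.subset_span ⟨w, rfl⟩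
  set e : Fin d → Fin d → ℂ := fun a ↦ Pi.single a 1
  have polarization :
      eTens u v + eTens v u = square (e u + e v) - square (e u) - square (e v) := by
    ext ⟨a, b⟩
    simp only [square, e, eTens, Pi.add_apply, Pi.sub_apply, Pi.single_apply, Prod.mk.injEq]
    split_ifs <;> first | tauto | norm_num
  rw [polarization]
  exact sub_mem (sub_mem (square_mem _) (square_mem _)) (square_mem _)

lemma specialSubspace_le_symSubspace (d : ℕ) : specialSubspace d ≤ symSubspace d := by
  refine Submodule.span_le.mpr ?_
  rintro x ⟨i, k, h1, h2, rfl⟩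
  rw [SetLike.mem_coe]
  have hdiff := sub_mem (eTens_add_eTens_mem_symSubspace (d := d) ⟨i, by omega⟩ ⟨i + k, by omega⟩)
    (eTens_add_eTens_mem_symSubspace ⟨i + 1, h1⟩ ⟨i + k + 1, h2⟩)
  convert hdiff using 1
  abel

noncomputable def specialGen {n : ℕ} (i j : Fin n) : Fin (n + 1) × Fin (n + 1) → ℂ :=
  (eTens i.castSucc j.castSucc + eTens j.castSucc i.castSucc) -
    (eTens i.succ j.succ + eTens j.succ i.succ)

lemma specialSubspace_succ_eq_span (n : ℕ) :
    specialSubspace (n + 1) = Submodule.span ℂ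
      (Set.range fun p : {p : Fin n × Fin n // p.1 ≤ p.2} ↦ specialGen p.1.1 p.1.2) := by
  unfold specialSubspace
  congr 1
  ext x
  constructor
  · rintro ⟨i, k, h1, h2, rfl⟩
    refine ⟨⟨(⟨i, by omega⟩, ⟨i + k, by omega⟩), by simp [Fin.le_def]⟩, ?_⟩
    simp only [specialGen, Fin.castSucc_mk, Fin.succ_mk]
    abel
  · rintro ⟨⟨⟨⟨i, hi⟩, ⟨j, hj⟩⟩, hij⟩, rfl⟩
    obtain ⟨k, rfl⟩ : ∃ k, j = i + k := ⟨j - i, by simp [Fin.le_def] at hij; omega⟩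
    refine ⟨i, k, by omega, by omega, ?_⟩
    simp only [specialGen, Fin.castSucc_mk, Fin.succ_mk]
    abel

noncomputable def diagonalTail (d a b : ℕ) : Module.Dual ℂ (Fin d × Fin d → ℂ) :=
  ∑ p with a ≤ (p.1 : ℕ) ∧ ((p.1 : ℕ) : ℤ) - p.2 = a - b, LinearMap.proj p

lemma eTens_eq_single {d : ℕ} (u v : Fin d) : eTens u v = Pi.single (u, v) 1 := by
  ext p
  simp [eTens, Pi.single_apply]

lemma diagonalTail_eTens {d : ℕ} (a b : ℕ) (u v : Fin d) :
    diagonalTail d a b (eTens u v) =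
      if a ≤ (u : ℕ) ∧ ((u : ℕ) : ℤ) - v = a - b then 1 else 0 := by
  simp [diagonalTail, eTens_eq_single, Pi.single_apply]

lemma diagonalTail_specialGen {n : ℕ} {i j i' j' : Fin n} (hij : i ≤ j) (hij' : i' ≤ j') :
    diagonalTail (n + 1) (i + 1) (j + 1) (specialGen i' j') =
      if i' = i ∧ j' = j then -(1 + if i = j then 1 else 0) else 0 := by
  simp only [specialGen, map_sub, map_add, diagonalTail_eTens, Fin.val_castSucc, Fin.val_succ,
    Fin.ext_iff, Fin.le_def] at *
  split_ifs <;> (try norm_num) <;> omega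

lemma linearIndependent_specialGen (n : ℕ) :
    LinearIndependent ℂ fun p : {p : Fin n × Fin n // p.1 ≤ p.2} ↦ specialGen p.1.1 p.1.2 := by
  refine .of_pairwise_dual_eq_zero_of_ne_zero _
    (fun p ↦ diagonalTail (n + 1) (p.1.1 + 1) (p.1.2 + 1)) (fun p q hpq ↦ ?_) (fun p ↦ ?_)
  · dsimp only
    rw [diagonalTail_specialGen p.2 q.2, if_neg]
    rintro ⟨h1, h2⟩
    exact hpq (Subtype.ext (Prod.ext h1.symm h2.symm))
  · rw [diagonalTail_specialGen p.2 p.2, if_pos ⟨rfl, rfl⟩]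
    split_ifs <;> norm_num

theorem stmt15 (d : ℕ) :
    specialSubspace d ≤ symSubspace d ∧
    Module.finrank ℂ (specialSubspace d) = d * (d - 1) / 2 := by
  refine ⟨specialSubspace_le_symSubspace d, ?_⟩
  cases d with
  | zero => simp [Submodule.eq_bot_of_subsingleton]
  | succ n =>
    rw [specialSubspace_succ_eq_span, finrank_span_eq_card (linearIndependent_specialGen n),
      Fintype.card_subtype_fst_le_snd, Fintype.card_fin, Nat.choose_two_right, Nat.add_sub_cancel]
end

section
/- Let S ⊆ C^d ⊗ C^d be the span of (e_i ⊗ e_{i+k} − e_{i+1} ⊗ e_{i+k+1}) + (e_{i+k} ⊗ e_i − e_{i+k+1} ⊗ e_{i+1}) over all 1 ≤ i < d, k ≥ 0, i + k < d. Then every quantum state ρ on C^d ⊗ C^d with range contained in S has the property that ρ^Γ (the partial transpose of ρ) has a negative eigenvalue. -/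
open Matrix ComplexOrder

noncomputable def ptrans {d : ℕ} (A : Matrix (Fin d × Fin d) (Fin d × Fin d) ℂ) :
    Matrix (Fin d × Fin d) (Fin d × Fin d) ℂ :=
  fun p q => A (p.1, q.2) (q.1, p.2)

/-!
Every vector of `specialSubspace d`, read as a `d × d` matrix, is symmetric and each of its
forward diagonals sums to zero; hence so is every column of `ρ`, and by hermiticity the diagonal
of `ρ` is symmetric as well. Suppose `ρ^Γ` is positive semidefinite and let `k` be the largest
offset with a nonzero diagonal entry `ρ (a, a + k) (a, a + k)`. The entry `ρ p q` sits in row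
`(p.1, q.2)` of `ρ^Γ`, whose diagonal entry is a diagonal entry of `ρ`; when `q.2 > p.1 + k` that
entry vanishes, and in a positive semidefinite matrix a zero diagonal entry kills its row. So the
column of `ρ` at `(a, a + k)` meets the `k`-th forward diagonal only in `ρ (a, a + k) (a, a + k)`,
which therefore vanishes as the diagonal sum does: a contradiction.
-/

noncomputable def diagSum (d m : ℕ) : (Fin d × Fin d → ℂ) →ₗ[ℂ] ℂ :=
  ∑ p : Fin d × Fin d with (p.2 : ℕ) = p.1 + m, LinearMap.proj p

section

variable {d : ℕ}

lemma eTens_swap (u v a b : Fin d) : eTens u v (a, b) = eTens v u (b, a) := by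
  simp only [eTens, Prod.mk.injEq]
  exact if_congr and_comm rfl rfl

lemma diagSum_apply {m : ℕ} (x : Fin d × Fin d → ℂ) :
    diagSum d m x = ∑ p : Fin d × Fin d with (p.2 : ℕ) = p.1 + m, x p := by
  simp [diagSum]

lemma diagSum_eTens {m : ℕ} (u v : Fin d) :
    diagSum d m (eTens u v) = if (v : ℕ) = u + m then 1 else 0 := by
  simp [diagSum_apply, eTens, Finset.sum_ite_eq']

lemma specialSubspace_le_ker {f : (Fin d × Fin d → ℂ) →ₗ[ℂ] ℂ}
    (hf : ∀ (i k : ℕ) (h1 : i + 1 < d) (h2 : i + k + 1 < d),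
      f ((eTens ⟨i, by omega⟩ ⟨i + k, by omega⟩ - eTens ⟨i + 1, h1⟩ ⟨i + k + 1, h2⟩) +
        (eTens ⟨i + k, by omega⟩ ⟨i, by omega⟩ - eTens ⟨i + k + 1, h2⟩ ⟨i + 1, h1⟩)) = 0) :
    specialSubspace d ≤ LinearMap.ker f :=
  Submodule.span_le.2 fun _ ⟨i, k, h1, h2, hx⟩ => hx ▸ hf i k h1 h2

lemma apply_swap_of_mem_specialSubspace {x : Fin d × Fin d → ℂ} (hx : x ∈ specialSubspace d)
    (a b : Fin d) : x (a, b) = x (b, a) := by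
  let f : (Fin d × Fin d → ℂ) →ₗ[ℂ] ℂ :=
    LinearMap.proj (R := ℂ) (φ := fun _ => ℂ) (a, b) - LinearMap.proj (b, a)
  have hf : specialSubspace d ≤ LinearMap.ker f := specialSubspace_le_ker fun i k h1 h2 => by
    simp only [f, LinearMap.sub_apply, LinearMap.proj_apply, Pi.add_apply, Pi.sub_apply,
      eTens_swap _ _ a b]
    ring
  simpa [f, sub_eq_zero] using hf hx

lemma diagSum_eq_zero_of_mem_specialSubspace {x : Fin d × Fin d → ℂ}
    (hx : x ∈ specialSubspace d) (m : ℕ) : diagSum d m x = 0 :=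
  specialSubspace_le_ker (fun i k h1 h2 => by
    simp only [map_add, map_sub, diagSum_eTens]
    split_ifs <;> first | omega | norm_num) hx

lemma exists_topmost_nonzero_diagonal {M : Type*} [Zero M] {w : Fin d × Fin d → M}
    (hw : ∃ a b : Fin d, a ≤ b ∧ w (a, b) ≠ 0) :
    ∃ (k : ℕ) (a b : Fin d), (b : ℕ) = a + k ∧ w (a, b) ≠ 0 ∧
      ∀ p : Fin d × Fin d, w p ≠ 0 → (p.2 : ℕ) ≤ p.1 + k := by
  classical
  obtain ⟨a, b, hab, hw⟩ := hw
  obtain ⟨p₀, hp₀, hmax⟩ :=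
    (Finset.univ.filter fun p : Fin d × Fin d => p.1 ≤ p.2 ∧ w p ≠ 0).exists_max_image
      (fun p => (p.2 : ℕ) - p.1) ⟨(a, b), by simp [hab, hw]⟩
  simp only [Finset.mem_filter, Finset.mem_univ, true_and] at hp₀ hmax
  refine ⟨p₀.2 - p₀.1, p₀.1, p₀.2, by omega, hp₀.2, fun p hp => ?_⟩
  by_cases hle : p.1 ≤ p.2
  · have := hmax p ⟨hle, hp⟩
    omega
  · omega

end

lemma Matrix.PosSemidef.apply_eq_zero_of_apply_self_eq_zero {n 𝕜 : Type*} [Fintype n]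
    [RCLike 𝕜] {A : Matrix n n 𝕜} (hA : A.PosSemidef) {i : n} (hi : A i i = 0) (j : n) :
    A i j = 0 := by
  classical
  have hcol : A *ᵥ Pi.single i 1 = 0 := (hA.dotProduct_mulVec_zero_iff _).1 (by simp [hi])
  rw [← hA.1.apply i j, show A j i = 0 by simpa using congrFun hcol j, star_zero]

section

variable {d : ℕ} {ρ : Matrix (Fin d × Fin d) (Fin d × Fin d) ℂ}

lemma apply_self_swap (hρ : ρ.IsHermitian) (hsymm : ∀ a b t, ρ (a, b) t = ρ (b, a) t)
    (a b : Fin d) : ρ (b, a) (b, a) = ρ (a, b) (a, b) := by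
  calc ρ (b, a) (b, a) = ρ (a, b) (b, a) := hsymm b a _
    _ = star (ρ (b, a) (a, b)) := (hρ.apply _ _).symm
    _ = star (ρ (a, b) (a, b)) := by rw [hsymm b a]
    _ = ρ (a, b) (a, b) := hρ.apply _ _

lemma exists_le_apply_self_ne_zero (hρ : ρ.IsHermitian)
    (hsymm : ∀ a b t, ρ (a, b) t = ρ (b, a) t) (htr : ρ.trace ≠ 0) :
    ∃ a b : Fin d, a ≤ b ∧ ρ (a, b) (a, b) ≠ 0 := by
  obtain ⟨⟨a, b⟩, -, hab⟩ := Finset.exists_ne_zero_of_sum_ne_zero htr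
  rcases le_total a b with h | h
  · exact ⟨a, b, h, hab⟩
  · exact ⟨b, a, h, by rwa [apply_self_swap hρ hsymm]⟩

lemma apply_eq_zero_of_ptrans_posSemidef (hΓ : (ptrans ρ).PosSemidef) {k : ℕ}
    (hband : ∀ p : Fin d × Fin d, ρ p p ≠ 0 → (p.2 : ℕ) ≤ p.1 + k) {p q : Fin d × Fin d}
    (hpq : (p.1 : ℕ) + k < q.2) : ρ p q = 0 :=
  hΓ.apply_eq_zero_of_apply_self_eq_zero (i := (p.1, q.2))
    (by by_contra h; exact (hband (p.1, q.2) h).not_gt hpq) (q.1, p.2)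

lemma diagSum_col_eq_apply_self (hρ : ρ.IsHermitian) (hΓ : (ptrans ρ).PosSemidef) {k : ℕ}
    (hband : ∀ p : Fin d × Fin d, ρ p p ≠ 0 → (p.2 : ℕ) ≤ p.1 + k) {a b : Fin d}
    (hab : (b : ℕ) = a + k) : diagSum d k (ρ.col (a, b)) = ρ (a, b) (a, b) := by
  rw [diagSum_apply]
  refine Finset.sum_eq_single_of_mem (a, b) (by simpa using hab) fun p hp hne => ?_
  simp only [Finset.mem_filter, Finset.mem_univ, true_and] at hp
  have hpa : (p.1 : ℕ) ≠ a := fun h =>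
    hne (Prod.ext (Fin.ext h) (Fin.ext (show (p.2 : ℕ) = b by omega)))
  rcases lt_or_gt_of_ne hpa with h | h
  · exact apply_eq_zero_of_ptrans_posSemidef hΓ hband (by simp only; omega)
  · rw [col_apply, ← hρ.apply,
      apply_eq_zero_of_ptrans_posSemidef hΓ hband (by simp only; omega), star_zero]

end

theorem stmt16 (d : ℕ) (ρ : Matrix (Fin d × Fin d) (Fin d × Fin d) ℂ)
    (hρ : ρ.PosSemidef) (htr : ρ.trace = 1)
    (hrange : ∀ x : Fin d × Fin d → ℂ, ρ.mulVec x ∈ specialSubspace d) :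
    ∀ h : (ptrans ρ).IsHermitian, ∃ i, h.eigenvalues i < 0 := by
  intro h
  by_contra! hnonneg
  have hΓ : (ptrans ρ).PosSemidef := h.posSemidef_iff_eigenvalues_nonneg.2 hnonneg
  have hcol (t : Fin d × Fin d) : ρ.col t ∈ specialSubspace d :=
    mulVec_single_one ρ t ▸ hrange _
  have hsymm (a b : Fin d) (t) : ρ (a, b) t = ρ (b, a) t :=
    apply_swap_of_mem_specialSubspace (hcol t) a b
  obtain ⟨k, a, b, hab, hne, hband⟩ := exists_topmost_nonzero_diagonal (w := fun p => ρ p p)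
    (exists_le_apply_self_ne_zero hρ.isHermitian hsymm (by simp [htr]))
  apply hne
  rw [← diagSum_col_eq_apply_self hρ.isHermitian hΓ hband hab]
  exact diagSum_eq_zero_of_mem_specialSubspace (hcol (a, b)) k
end
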